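/- If X has a multivariate ℓ1-norm symmetric distribution with generating law ν, then its joint survival function satisfies P[X_1 > x_1,...,X_n > x_n] = ∫_{‖x‖}^∞ (1 - ‖x‖/r)^{n-1} ν(dr) = F̄(‖x‖) for all x ∈ ℝ_+^n, where F̄ is the one-dimensional marginal survival function and ‖x‖ = Σ_i x_i. -/

import Mathlib

/-!
Write `U = E / ∑ E` with `E` a vector of iid `Exp(1)` variables. For a fixed radius `r > ∑ x`
the event `∀ i, x i < r * U i` is, up to a null set, the cone `∀ i, c i * ∑ E < E i` with
`c = x / r`. The linear map `u ↦ (1 - ∑ c) • u + (∑ u) • c` carries the positive orthant onto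
this cone, preserves `∑ u` and hence the joint density `exp (-∑ u)`, and has determinant
`(1 - ∑ c) ^ (n - 1)`, which is therefore the probability of the cone. Integrating against the
law `ν` of the independent radius `R` gives the joint survival function; the marginal event
`∑ x < R * U i` is the joint event for the point `(∑ x) • eᵢ`, up to a null set.
-/

open MeasureTheory ProbabilityTheory Set
open scoped ENNReal

theorem lintegral_fin_nat_prod_eq_prod {α : Type*} [MeasurableSpace α] (μ : Measure α)
    [SigmaFinite μ] : ∀ {n : ℕ} {g : Fin n → α → ℝ≥0∞}, (∀ i, Measurable (g i)) →
    ∫⁻ x, ∏ i, g i (x i) ∂Measure.pi (fun _ => μ) = ∏ i, ∫⁻ t, g i t ∂μ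
  | 0, g, _ => by simp
  | n + 1, g, hg => by
    rw [← ((measurePreserving_piFinSuccAbove (fun _ => μ) 0).symm).lintegral_comp_emb
      (MeasurableEquiv.measurableEmbedding _)]
    simp only [Fin.prod_univ_succ, MeasurableEquiv.piFinSuccAbove_symm_apply,
      Fin.insertNthEquiv_zero, Fin.consEquiv_apply, Fin.cons_zero, Fin.cons_succ]
    rw [lintegral_prod_mul (g := fun x : Fin n → α => ∏ i, g i.succ (x i)) (hg 0).aemeasurable
      (Finset.measurable_prod _ fun i _ => (hg i.succ).comp (measurable_pi_apply i)).aemeasurable,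
      lintegral_fin_nat_prod_eq_prod μ fun i => hg i.succ]

theorem Matrix.det_smul_one_add_replicateCol_mul_replicateRow {m K : Type*} [Fintype m]
    [DecidableEq m] [Nonempty m] [Field K] {k : K} (hk : k ≠ 0) (u v : m → K) :
    (k • 1 + replicateCol Unit u * replicateRow Unit v).det
      = k ^ (Fintype.card m - 1) * (k + v ⬝ᵥ u) := by
  have hfactor : k • 1 + replicateCol Unit u * replicateRow Unit v
      = k • (1 + replicateCol Unit (k⁻¹ • u) * replicateRow Unit v) := by
    rw [smul_add, replicateCol_smul, Matrix.smul_mul, smul_smul, mul_inv_cancel₀ hk, one_smul]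
  obtain ⟨d, hd⟩ := Nat.exists_eq_add_one.2 (Fintype.card_pos (α := m))
  rw [hfactor, det_smul, det_one_add_replicateCol_mul_replicateRow, dotProduct_smul, hd,
    Nat.add_sub_cancel, pow_succ, smul_eq_mul]
  field_simp

instance isProbabilityMeasure_expMeasure_one : IsProbabilityMeasure (expMeasure 1) :=
  isProbabilityMeasure_expMeasure one_pos

@[fun_prop]
lemma measurable_exponentialPDF (r : ℝ) : Measurable (exponentialPDF r) :=
  (measurable_exponentialPDFReal r).ennreal_ofReal

lemma expMeasure_eq_withDensity (r : ℝ) :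
    expMeasure r = volume.withDensity (exponentialPDF r) := rfl

noncomputable abbrev expPi (n : ℕ) : Measure (Fin n → ℝ) := Measure.pi fun _ => expMeasure 1

lemma expPi_eq_withDensity (n : ℕ) :
    expPi n = volume.withDensity fun e => ∏ i, exponentialPDF 1 (e i) := by
  refine Measure.pi_eq fun s hs => ?_
  have hind : (univ.pi s).indicator (fun e : Fin n → ℝ => ∏ i, exponentialPDF 1 (e i))
      = fun e => ∏ i, (s i).indicator (exponentialPDF 1) (e i) := by
    ext e
    classical
    simp only [indicator_apply, Finset.prod_ite_zero, mem_univ_pi, Finset.mem_univ, true_imp_iff]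
  rw [withDensity_apply _ (.univ_pi hs), ← lintegral_indicator (.univ_pi hs), hind, volume_pi,
    lintegral_fin_nat_prod_eq_prod _ (g := fun i => (s i).indicator (exponentialPDF 1))
      fun i => (measurable_exponentialPDF 1).indicator (hs i)]
  refine Finset.prod_congr rfl fun i _ => ?_
  rw [lintegral_indicator (hs i), expMeasure_eq_withDensity, withDensity_apply _ (hs i)]

lemma prod_exponentialPDF_one {ι : Type*} [Fintype ι] {e : ι → ℝ} (he : ∀ i, 0 ≤ e i) :
    ∏ i, exponentialPDF 1 (e i) = ENNReal.ofReal (Real.exp (-∑ i, e i)) := by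
  simp only [exponentialPDF_of_nonneg (he _), one_mul,
    ← ENNReal.ofReal_prod_of_nonneg fun i _ => (Real.exp_pos _).le, ← Real.exp_sum,
    Finset.sum_neg_distrib]

lemma ae_expMeasure_one_pos : ∀ᵐ t ∂expMeasure 1, 0 < t := by
  rw [expMeasure_eq_withDensity, ae_withDensity_iff (measurable_exponentialPDF 1)]
  filter_upwards [Measure.ae_ne volume 0] with t ht hpdf
  exact lt_of_le_of_ne (not_lt.1 fun h => hpdf (exponentialPDF_of_neg h)) ht.symm

lemma ae_expPi_pos (n : ℕ) : ∀ᵐ e ∂expPi n, ∀ i, 0 < e i :=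
  ae_all_iff.2 fun i =>
    (measurePreserving_eval _ i).quasiMeasurePreserving.ae ae_expMeasure_one_pos

section Corner

variable {n : ℕ}

noncomputable def cornerMap (k : ℝ) (c : Fin n → ℝ) : (Fin n → ℝ) →ₗ[ℝ] (Fin n → ℝ) :=
  Matrix.toLin' (k • 1 + Matrix.replicateCol Unit c * Matrix.replicateRow Unit (1 : Fin n → ℝ))

lemma cornerMap_apply (k : ℝ) (c u : Fin n → ℝ) : cornerMap k c u = k • u + (∑ j, u j) • c := by
  ext i
  simp [cornerMap, Matrix.mulVec, dotProduct, Matrix.mul_apply, Finset.mul_sum, mul_comm]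

lemma sum_cornerMap {k : ℝ} {c : Fin n → ℝ} (hk : k + ∑ i, c i = 1) (u : Fin n → ℝ) :
    ∑ i, cornerMap k c u i = ∑ i, u i := by
  simp only [cornerMap_apply, Pi.add_apply, Pi.smul_apply, smul_eq_mul, Finset.sum_add_distrib,
    ← Finset.mul_sum]
  linear_combination (∑ j, u j) * hk

lemma det_cornerMap [NeZero n] {k : ℝ} (hk : k ≠ 0) (c : Fin n → ℝ) :
    LinearMap.det (cornerMap k c) = k ^ (n - 1) * (k + ∑ i, c i) := by
  rw [cornerMap, LinearMap.det_toLin', Matrix.det_smul_one_add_replicateCol_mul_replicateRow hk,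
    Fintype.card_fin, one_dotProduct]

lemma cornerMap_mem_cone_iff {k : ℝ} (hk : 0 < k) {c : Fin n → ℝ} (hkc : k + ∑ i, c i = 1)
    (u : Fin n → ℝ) :
    (∀ i, c i * ∑ j, cornerMap k c u j < cornerMap k c u i) ↔ ∀ i, 0 < u i := by
  simp only [sum_cornerMap hkc]
  simp only [cornerMap_apply, Pi.add_apply, Pi.smul_apply, smul_eq_mul]
  refine forall_congr' fun i => ?_
  rw [mul_comm (c i), lt_add_iff_pos_left, mul_pos_iff_of_pos_left hk]

lemma pos_of_mul_sum_lt {c e : Fin n → ℝ} (hc : ∀ i, 0 ≤ c i) (hcs : ∑ i, c i < 1)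
    (he : ∀ i, c i * ∑ j, e j < e i) (i : Fin n) : 0 < e i := by
  have hsum : (∑ i, c i) * ∑ j, e j ≤ ∑ j, e j := by
    rw [Finset.sum_mul]; exact Finset.sum_le_sum fun i _ => (he i).le
  have : 0 ≤ ∑ j, e j := by nlinarith
  exact (mul_nonneg (hc i) this).trans_lt (he i)

theorem expPi_setOf_forall_mul_sum_lt [NeZero n] {c : Fin n → ℝ} (hc : ∀ i, 0 ≤ c i)
    (hcs : ∑ i, c i < 1) :
    expPi n {e | ∀ i, c i * ∑ j, e j < e i} = ENNReal.ofReal ((1 - ∑ i, c i) ^ (n - 1)) := by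
  set k := 1 - ∑ i, c i
  have hk : 0 < k := sub_pos.2 hcs
  have hkc : k + ∑ i, c i = 1 := sub_add_cancel _ _
  set f := cornerMap k c
  set S := {e : Fin n → ℝ | ∀ i, c i * ∑ j, e j < e i}
  set O := {e : Fin n → ℝ | ∀ i, 0 < e i}
  set D : (Fin n → ℝ) → ℝ≥0∞ := fun e => ∏ i, exponentialPDF 1 (e i)
  have hS : MeasurableSet S := by measurability
  have hO : MeasurableSet O := by measurability
  have hD : Measurable D := by fun_prop
  have hdet : LinearMap.det f = k ^ (n - 1) := by
    rw [det_cornerMap hk.ne', hkc, mul_one]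
  have hdet_pos : 0 < LinearMap.det f := hdet ▸ pow_pos hk _
  -- the change of variables `e = f u` maps the orthant onto the cone and preserves the density
  have hchange : ∀ u, S.indicator D (f u) = O.indicator D u := by
    intro u
    by_cases hu : u ∈ O
    · have hfu : f u ∈ S := (cornerMap_mem_cone_iff hk hkc u).2 hu
      rw [indicator_of_mem hfu, indicator_of_mem hu]
      simp only [D]
      rw [prod_exponentialPDF_one fun i => (pos_of_mul_sum_lt hc hcs hfu i).le,
        prod_exponentialPDF_one fun i => (hu i).le, sum_cornerMap hkc]
    · have hfu : f u ∉ S := fun hfu => hu ((cornerMap_mem_cone_iff hk hkc u).1 hfu)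
      rw [indicator_of_notMem hfu, indicator_of_notMem hu]
  calc expPi n S = ∫⁻ e, S.indicator D e := by
        rw [expPi_eq_withDensity, withDensity_apply _ hS, lintegral_indicator hS]
    _ = ENNReal.ofReal (LinearMap.det f) * ∫⁻ e, S.indicator D e ∂Measure.map f volume := by
        rw [Real.map_linearMap_volume_pi_eq_smul_volume_pi hdet_pos.ne', lintegral_smul_measure,
          smul_eq_mul, ← mul_assoc, ← ENNReal.ofReal_mul hdet_pos.le,
          abs_of_pos (inv_pos.2 hdet_pos), mul_inv_cancel₀ hdet_pos.ne', ENNReal.ofReal_one,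
          one_mul]
    _ = ENNReal.ofReal (k ^ (n - 1)) * expPi n O := by
        rw [lintegral_map (hD.indicator hS) f.continuous_of_finiteDimensional.measurable, hdet]
        simp_rw [hchange]
        rw [lintegral_indicator hO, ← withDensity_apply _ hO, ← expPi_eq_withDensity]
    _ = ENNReal.ofReal (k ^ (n - 1)) := by
        rw [(ae_iff_measure_eq hO.nullMeasurableSet).1 (ae_expPi_pos n), measure_univ, mul_one]

end Corner

/-- The uniform distribution on the unit simplex, realised as the law of normalised iid
`Exp(1)` variables. -/
noncomputable def simplexMeasure (n : ℕ) : Measure (Fin n → ℝ) :=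
  (expPi n).map fun e i => e i / ∑ j, e j

noncomputable def survivalKernel (n : ℕ) (s r : ℝ) : ℝ≥0∞ :=
  (Ioi s).indicator (fun r => ENNReal.ofReal ((1 - s / r) ^ (n - 1))) r

section Simplex

variable {n : ℕ}

lemma measurable_normalize : Measurable fun (e : Fin n → ℝ) i => e i / ∑ j, e j := by fun_prop

instance : IsProbabilityMeasure (simplexMeasure n) :=
  Measure.isProbabilityMeasure_map measurable_normalize.aemeasurable

lemma ae_simplexMeasure [NeZero n] :
    ∀ᵐ u ∂simplexMeasure n, (∀ i, 0 < u i) ∧ ∑ i, u i = 1 := by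
  rw [simplexMeasure, ae_map_iff measurable_normalize.aemeasurable (by measurability)]
  filter_upwards [ae_expPi_pos n] with e he
  have hsum : 0 < ∑ j, e j := Finset.sum_pos (fun j _ => he j) Finset.univ_nonempty
  exact ⟨fun i => div_pos (he i) hsum, by rw [← Finset.sum_div, div_self hsum.ne']⟩

theorem simplexMeasure_setOf_forall_lt [NeZero n] {c : Fin n → ℝ} (hc : ∀ i, 0 ≤ c i)
    (hcs : ∑ i, c i < 1) :
    simplexMeasure n {u | ∀ i, c i < u i} = ENNReal.ofReal ((1 - ∑ i, c i) ^ (n - 1)) := by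
  rw [simplexMeasure, Measure.map_apply measurable_normalize (by measurability),
    ← expPi_setOf_forall_mul_sum_lt hc hcs]
  refine measure_congr (Filter.eventuallyEq_set.2 ?_)
  filter_upwards [ae_expPi_pos n] with e he
  have hsum : 0 < ∑ j, e j := Finset.sum_pos (fun j _ => he j) Finset.univ_nonempty
  simp only [mem_preimage, mem_ofPred_eq, lt_div_iff₀ hsum]

theorem simplexMeasure_joint_survival [NeZero n] {x : Fin n → ℝ} (hx : ∀ i, 0 ≤ x i) (r : ℝ) :
    simplexMeasure n {u | ∀ i, x i < r * u i} = survivalKernel n (∑ i, x i) r := by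
  rcases lt_or_ge (∑ i, x i) r with hr | hr
  · have hr0 : 0 < r := (Finset.sum_nonneg fun i _ => hx i).trans_lt hr
    have hset : {u : Fin n → ℝ | ∀ i, x i < r * u i} = {u | ∀ i, x i / r < u i} := by
      ext u
      simp only [mem_ofPred_eq, div_lt_iff₀' hr0]
    rw [hset, simplexMeasure_setOf_forall_lt (fun i => div_nonneg (hx i) hr0.le)
      (by rwa [← Finset.sum_div, div_lt_one hr0]), survivalKernel,
      indicator_of_mem (mem_Ioi.2 hr), Finset.sum_div]
  · rw [survivalKernel, indicator_of_notMem (notMem_Ioi.2 hr), measure_eq_zero_iff_ae_notMem]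
    filter_upwards [ae_simplexMeasure] with u ⟨_, hu1⟩ hu
    have := Finset.sum_lt_sum_of_nonempty Finset.univ_nonempty fun i _ => hu i
    rw [← Finset.mul_sum, hu1, mul_one] at this
    exact this.not_ge hr

theorem simplexMeasure_marginal_survival [NeZero n] {s : ℝ} (hs : 0 ≤ s) (r : ℝ) (i : Fin n) :
    simplexMeasure n {u | s < r * u i} = survivalKernel n s r := by
  classical
  have hsingle := simplexMeasure_joint_survival (x := Pi.single i s)
    (fun j => by by_cases hj : j = i <;> simp [hj, hs]) r
  rw [Finset.sum_pi_single', if_pos (Finset.mem_univ i)] at hsingle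
  rw [← hsingle]
  refine measure_congr (Filter.eventuallyEq_set.2 ?_)
  filter_upwards [ae_simplexMeasure] with u ⟨hu, _⟩
  refine ⟨fun h j => ?_, fun h => by simpa using h i⟩
  have hr : 0 < r := pos_of_mul_pos_left (hs.trans_lt h) (hu i).le
  by_cases hj : j = i
  · subst hj; simpa using h
  · simpa [Pi.single_apply, hj] using mul_pos hr (hu j)

end Simplex

theorem ProbabilityTheory.IndepFun.measure_preimage_prodMk_eq_lintegral {Ω α β : Type*}
    [MeasurableSpace Ω] [MeasurableSpace α] [MeasurableSpace β] {μ : Measure Ω} [IsFiniteMeasure μ]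
    {X : Ω → α} {Y : Ω → β} (hXY : IndepFun X Y μ) (hX : AEMeasurable X μ) (hY : AEMeasurable Y μ)
    {A : Set (α × β)} (hA : MeasurableSet A) :
    μ ((fun ω => (X ω, Y ω)) ⁻¹' A) = ∫⁻ x, μ.map Y (Prod.mk x ⁻¹' A) ∂μ.map X := by
  rw [← Measure.map_apply_of_aemeasurable (hX.prodMk hY) hA,
    (indepFun_iff_map_prod_eq_prod_map_map hX hY).1 hXY, Measure.prod_apply hA]

theorem measure_eq_setLIntegral_survivalKernel {Ω : Type*} [MeasurableSpace Ω] {μ : Measure Ω}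
    [IsFiniteMeasure μ] {n : ℕ} {ν : Measure ℝ} [NeZero ν] {R : Ω → ℝ}
    {U : Ω → Fin n → ℝ} (hR : μ.map R = ν) (hU : μ.map U = simplexMeasure n)
    (hindep : IndepFun R U μ) {A : Set (ℝ × (Fin n → ℝ))} (hA : MeasurableSet A) {s : ℝ}
    (hslice : ∀ r, simplexMeasure n (Prod.mk r ⁻¹' A) = survivalKernel n s r) :
    μ ((fun ω => (R ω, U ω)) ⁻¹' A)
      = ∫⁻ r in Ioi s, ENNReal.ofReal ((1 - s / r) ^ (n - 1)) ∂ν := by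
  have hRm : AEMeasurable R μ := .of_map_ne_zero (hR ▸ NeZero.ne ν)
  have hUm : AEMeasurable U μ := .of_map_ne_zero (hU ▸ IsProbabilityMeasure.ne_zero _)
  rw [hindep.measure_preimage_prodMk_eq_lintegral hRm hUm hA, hR, hU,
    ← lintegral_indicator measurableSet_Ioi]
  exact lintegral_congr hslice

theorem asp_l1_symmetric_joint_survival_general
    {Ω : Type*} [MeasurableSpace Ω] (μ : Measure Ω) [IsProbabilityMeasure μ]
    (n : ℕ) (hn : 2 ≤ n) (ν : Measure ℝ) [IsProbabilityMeasure ν]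
    (R : Ω → ℝ) (U : Ω → Fin n → ℝ)
    (hR : Measure.map R μ = ν)
    (hU : Measure.map U μ =
      Measure.map (fun e (i : Fin n) => e i / ∑ j, e j)
        (Measure.pi fun _ : Fin n => expMeasure 1))
    (hindep : IndepFun R U μ) :
    ∀ x : Fin n → ℝ, (∀ i, 0 ≤ x i) →
      (μ {ω | ∀ i, x i < R ω * U ω i}
          = ∫⁻ r in Set.Ioi (∑ i, x i),
              ENNReal.ofReal ((1 - (∑ i, x i) / r) ^ (n - 1)) ∂ν) ∧
      (∀ i : Fin n, μ {ω | (∑ j, x j) < R ω * U ω i}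
          = ∫⁻ r in Set.Ioi (∑ i, x i),
              ENNReal.ofReal ((1 - (∑ i, x i) / r) ^ (n - 1)) ∂ν) := by
  intro x hx
  have : NeZero n := ⟨by omega⟩
  have hU' : μ.map U = simplexMeasure n := hU
  refine ⟨measure_eq_setLIntegral_survivalKernel hR hU' hindep
    (A := {p | ∀ i, x i < p.1 * p.2 i}) (by measurability)
    fun r => simplexMeasure_joint_survival hx r, fun i => ?_⟩
  exact measure_eq_setLIntegral_survivalKernel hR hU' hindep
    (A := {p | ∑ j, x j < p.1 * p.2 i}) (by measurability)
    fun r => simplexMeasure_marginal_survival (Finset.sum_nonneg fun j _ => hx j) r i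

/-- Joint survival function of a multivariate ℓ1-norm symmetric distribution:
`P[X_1 > x_1, ..., X_n > x_n] = ∫_{‖x‖}^∞ (1 - ‖x‖/r)^(n-1) ν(dr) = F̄(‖x‖)` for
`x ∈ ℝ₊ⁿ`, where `‖x‖ = ∑ i, x i` and `F̄` is the one-dimensional marginal survival
function. -/
theorem asp_l1_symmetric_joint_survival
    {Ω : Type*} [MeasurableSpace Ω] (μ : Measure Ω) [IsProbabilityMeasure μ]
    (n : ℕ) (hn : 2 ≤ n) (ν : Measure ℝ) [IsProbabilityMeasure ν]
    (R : Ω → ℝ) (U : Ω → Fin n → ℝ)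
    (hR : Measure.map R μ = ν) (hRnn : ∀ᵐ ω ∂μ, 0 ≤ R ω)
    (hU : Measure.map U μ =
      Measure.map (fun e (i : Fin n) => e i / ∑ j, e j)
        (Measure.pi fun _ : Fin n => expMeasure 1))
    (hindep : IndepFun R U μ) :
    ∀ x : Fin n → ℝ, (∀ i, 0 ≤ x i) →
      (μ {ω | ∀ i, x i < R ω * U ω i}
          = ∫⁻ r in Set.Ioi (∑ i, x i),
              ENNReal.ofReal ((1 - (∑ i, x i) / r) ^ (n - 1)) ∂ν) ∧
      (∀ i : Fin n, μ {ω | (∑ j, x j) < R ω * U ω i}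
          = ∫⁻ r in Set.Ioi (∑ i, x i),
              ENNReal.ofReal ((1 - (∑ i, x i) / r) ^ (n - 1)) ∂ν) :=
  asp_l1_symmetric_joint_survival_general μ n hn ν R U hR hU hindep
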